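/- arXiv:1604.07318 — 5 statements merged into one kernel-verified Lean document; each statement's English description precedes it below -/
import Mathlib

section
/- Define f(y) = Si(2y)/y - sin²(y)/y² for y > 0. Then for all y > 0, 1 - (1/9)y² - (2/45)y⁴ ≤ f(y) ≤ 1 - (1/9)y² + (4/75)y⁴. -/
open Real MeasureTheory intervalIntegral

/-- If `F 0 = 0` and `F' = G ≥ 0` on `[0, ∞)`, then `F ≥ 0` on `[0, ∞)`. -/
private lemma nonneg_aux (F G : ℝ → ℝ) (h0 : F 0 = 0)
    (hF : ∀ x, HasDerivAt F (G x) x)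
    (hG : ∀ x, 0 ≤ x → 0 ≤ G x) : ∀ x, 0 ≤ x → 0 ≤ F x := by
  intro x hx
  have hmono : MonotoneOn F (Set.Ici (0:ℝ)) := by
    apply monotoneOn_of_deriv_nonneg (convex_Ici 0)
      (fun t _ => (hF t).continuousAt.continuousWithinAt)
      (fun t _ => (hF t).differentiableAt.differentiableWithinAt)
    intro t ht
    rw [(hF t).deriv]
    rw [interior_Ici] at ht
    exact hG t (le_of_lt ht)
  calc (0:ℝ) = F 0 := h0.symm
    _ ≤ F x := hmono Set.self_mem_Ici hx hx

private lemma sin_ge_aux : ∀ x : ℝ, 0 ≤ x → x - x ^ 3 / 6 ≤ Real.sin x := by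
  have h := nonneg_aux (fun x => Real.sin x - (x - x ^ 3 / 6))
    (fun x => Real.cos x - (1 - x ^ 2 / 2)) (by simp)
    (fun x => by
      have h1 := (Real.hasDerivAt_sin x).sub
        ((hasDerivAt_id x).sub ((hasDerivAt_pow 3 x).div_const 6))
      exact h1.congr_deriv (by ring))
    (fun x _ => by nlinarith [Real.one_sub_sq_div_two_le_cos (x := x)])
  intro x hx; nlinarith [h x hx]

private lemma cos_le_aux : ∀ x : ℝ, 0 ≤ x → Real.cos x ≤ 1 - x ^ 2 / 2 + x ^ 4 / 24 := by
  have h := nonneg_aux (fun x => (1 - x ^ 2 / 2 + x ^ 4 / 24) - Real.cos x)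
    (fun x => Real.sin x - (x - x ^ 3 / 6)) (by norm_num)
    (fun x => by
      have h1 := ((((hasDerivAt_const x (1:ℝ)).sub
        ((hasDerivAt_pow 2 x).div_const 2)).add
        ((hasDerivAt_pow 4 x).div_const 24)).sub (Real.hasDerivAt_cos x))
      exact h1.congr_deriv (by push_cast; ring))
    (fun x hx => by nlinarith [sin_ge_aux x hx])
  intro x hx; nlinarith [h x hx]

private lemma sin_le_aux : ∀ x : ℝ, 0 ≤ x →
    Real.sin x ≤ x - x ^ 3 / 6 + x ^ 5 / 120 := by
  have h := nonneg_aux (fun x => (x - x ^ 3 / 6 + x ^ 5 / 120) - Real.sin x)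
    (fun x => (1 - x ^ 2 / 2 + x ^ 4 / 24) - Real.cos x) (by norm_num)
    (fun x => by
      have h1 := ((((hasDerivAt_id x).sub
        ((hasDerivAt_pow 3 x).div_const 6)).add
        ((hasDerivAt_pow 5 x).div_const 120)).sub (Real.hasDerivAt_sin x))
      exact h1.congr_deriv (by push_cast; ring))
    (fun x hx => by nlinarith [cos_le_aux x hx])
  intro x hx; nlinarith [h x hx]

private lemma cos_ge_aux : ∀ x : ℝ, 0 ≤ x →
    1 - x ^ 2 / 2 + x ^ 4 / 24 - x ^ 6 / 720 ≤ Real.cos x := by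
  have h := nonneg_aux (fun x => Real.cos x - (1 - x ^ 2 / 2 + x ^ 4 / 24 - x ^ 6 / 720))
    (fun x => (x - x ^ 3 / 6 + x ^ 5 / 120) - Real.sin x) (by norm_num)
    (fun x => by
      have h1 := (Real.hasDerivAt_cos x).sub ((((hasDerivAt_const x (1:ℝ)).sub
        ((hasDerivAt_pow 2 x).div_const 2)).add
        ((hasDerivAt_pow 4 x).div_const 24)).sub ((hasDerivAt_pow 6 x).div_const 720))
      exact h1.congr_deriv (by push_cast; ring))
    (fun x hx => by nlinarith [sin_le_aux x hx])
  intro x hx; nlinarith [h x hx]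

set_option maxHeartbeats 1600000 in
/-- For `y > 0`, with `f(y) = Si(2y)/y - sin²(y)/y²`,
`1 - (1/9)y² - (2/45)y⁴ ≤ f(y) ≤ 1 - (1/9)y² + (4/75)y⁴`. -/
theorem integrand_bounds (y : ℝ) (hy : 0 < y) :
    1 - (1 / 9) * y ^ 2 - (2 / 45) * y ^ 4 ≤
        (∫ t in (0:ℝ)..(2 * y), Real.sin t / t) / y - Real.sin y ^ 2 / y ^ 2 ∧
      (∫ t in (0:ℝ)..(2 * y), Real.sin t / t) / y - Real.sin y ^ 2 / y ^ 2 ≤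
        1 - (1 / 9) * y ^ 2 + (4 / 75) * y ^ 4 := by
  have h2y : (0:ℝ) ≤ 2 * y := by linarith
  set S : ℝ := ∫ t in (0:ℝ)..(2 * y), Real.sin t / t with hS
  -- integrability of sin t / t
  have hint : IntervalIntegrable (fun t => Real.sin t / t) volume 0 (2 * y) := by
    apply IntervalIntegrable.mono_fun (_root_.intervalIntegrable_const (c := (1:ℝ)))
    · exact (Real.measurable_sin.div measurable_id).aestronglyMeasurable
    · refine Filter.Eventually.of_forall fun t => ?_
      simp only [Real.norm_eq_abs, norm_one]
      rcases eq_or_ne t 0 with h | h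
      · simp [h]
      · rw [abs_div, div_le_one (abs_pos.2 h)]
        exact Real.abs_sin_le_abs
  have hlopoly : IntervalIntegrable (fun t : ℝ => 1 - t ^ 2 / 6) volume 0 (2 * y) :=
    (by continuity : Continuous fun t : ℝ => 1 - t ^ 2 / 6).intervalIntegrable _ _
  have hhipoly : IntervalIntegrable (fun t : ℝ => 1 - t ^ 2 / 6 + t ^ 4 / 120)
      volume 0 (2 * y) :=
    (by continuity : Continuous fun t : ℝ => 1 - t ^ 2 / 6 + t ^ 4 / 120).intervalIntegrable _ _
  -- pointwise bounds on sin t / t (for t ≠ 0)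
  have hptlo : ∀ t : ℝ, t ≠ 0 → 1 - t ^ 2 / 6 ≤ Real.sin t / t := by
    intro t ht
    rcases lt_or_gt_of_ne ht with h | h
    · rw [le_div_iff_of_neg h]
      have := sin_ge_aux (-t) (by linarith)
      rw [Real.sin_neg] at this
      nlinarith
    · rw [le_div_iff₀ h]
      nlinarith [sin_ge_aux t h.le]
  have hpthi : ∀ t : ℝ, t ≠ 0 → Real.sin t / t ≤ 1 - t ^ 2 / 6 + t ^ 4 / 120 := by
    intro t ht
    rcases lt_or_gt_of_ne ht with h | h
    · rw [div_le_iff_of_neg h]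
      have := sin_le_aux (-t) (by linarith)
      rw [Real.sin_neg] at this
      nlinarith
    · rw [div_le_iff₀ h]
      nlinarith [sin_le_aux t h.le]
  -- a.e. versions
  have haelo : (fun t : ℝ => 1 - t ^ 2 / 6) ≤ᵐ[volume] fun t => Real.sin t / t := by
    rw [Filter.EventuallyLE, MeasureTheory.ae_iff]
    refine measure_mono_null (fun t ht => ?_) (measure_singleton (0:ℝ))
    simp only [Set.mem_setOf_eq, not_le] at ht
    by_contra h
    exact absurd (hptlo t h) (not_le.2 ht)
  have haehi : (fun t : ℝ => Real.sin t / t) ≤ᵐ[volume]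
      fun t => 1 - t ^ 2 / 6 + t ^ 4 / 120 := by
    rw [Filter.EventuallyLE, MeasureTheory.ae_iff]
    refine measure_mono_null (fun t ht => ?_) (measure_singleton (0:ℝ))
    simp only [Set.mem_setOf_eq, not_le] at ht
    by_contra h
    exact absurd (hpthi t h) (not_le.2 ht)
  -- integral bounds
  have hilo : ∫ t in (0:ℝ)..(2 * y), (1 - t ^ 2 / 6) ≤
      ∫ t in (0:ℝ)..(2 * y), Real.sin t / t :=
    intervalIntegral.integral_mono_ae h2y hlopoly hint haelo
  have hihi : (∫ t in (0:ℝ)..(2 * y), Real.sin t / t) ≤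
      ∫ t in (0:ℝ)..(2 * y), (1 - t ^ 2 / 6 + t ^ 4 / 120) :=
    intervalIntegral.integral_mono_ae h2y hint hhipoly haehi
  -- compute the polynomial integrals
  have hc1 : ∫ t in (0:ℝ)..(2 * y), (1 - t ^ 2 / 6) = 2 * y - (2 * y) ^ 3 / 18 := by
    rw [intervalIntegral.integral_sub _root_.intervalIntegrable_const
      ((by continuity : Continuous fun t : ℝ => t ^ 2 / 6).intervalIntegrable _ _),
      intervalIntegral.integral_div, integral_pow]
    simp
    ring
  have hc2 : ∫ t in (0:ℝ)..(2 * y), (1 - t ^ 2 / 6 + t ^ 4 / 120) =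
      2 * y - (2 * y) ^ 3 / 18 + (2 * y) ^ 5 / 600 := by
    rw [intervalIntegral.integral_add hlopoly
      ((by continuity : Continuous fun t : ℝ => t ^ 4 / 120).intervalIntegrable _ _),
      hc1, intervalIntegral.integral_div, integral_pow]
    norm_num
    ring
  rw [hc1] at hilo
  rw [hc2] at hihi
  -- bounds on sin² y via cos (2y)
  have hsq : Real.sin y ^ 2 = 1 / 2 - Real.cos (2 * y) / 2 := Real.sin_sq_eq_half_sub y
  have hcu := cos_le_aux (2 * y) h2y
  have hcl := cos_ge_aux (2 * y) h2y
  have hy2 : (0:ℝ) < y ^ 2 := by positivity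
  have hsinU : Real.sin y ^ 2 ≤ y ^ 2 - y ^ 4 / 3 + 2 / 45 * y ^ 6 := by
    rw [hsq]; nlinarith [hcl]
  have hsinL : y ^ 2 - y ^ 4 / 3 ≤ Real.sin y ^ 2 := by
    rw [hsq]; nlinarith [hcu]
  rw [← hS] at hilo hihi
  clear_value S
  clear hint hlopoly hhipoly hptlo hpthi haelo haehi hc1 hc2 hsq hcu hcl hS
  constructor
  · have h1 : (2 : ℝ) - 4 / 9 * y ^ 2 ≤ S / y := by
      rw [le_div_iff₀ hy]; nlinarith [hilo]
    have h2 : Real.sin y ^ 2 / y ^ 2 ≤ 1 - y ^ 2 / 3 + 2 / 45 * y ^ 4 := by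
      rw [div_le_iff₀ hy2]; nlinarith [hsinU]
    linarith
  · have h1 : S / y ≤ 2 - 4 / 9 * y ^ 2 + 4 / 75 * y ^ 4 := by
      rw [div_le_iff₀ hy]; nlinarith [hihi]
    have h2 : (1 : ℝ) - y ^ 2 / 3 ≤ Real.sin y ^ 2 / y ^ 2 := by
      rw [le_div_iff₀ hy2]; nlinarith [hsinL]
    linarith
end

section
/- Define L(b) = (2/π)∫₀^{π/2} [Si(2b cos ψ)/(b cos ψ) - sin²(b cos ψ)/(b cos ψ)²] dψ for b > 0. Then 1 - b²/18 - b⁴/60 ≤ L(b) ≤ 1 - b²/18 + b⁴/50. -/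
open Real MeasureTheory intervalIntegral

lemma taylor_aux {F F' : ℝ → ℝ} (hd : ∀ x, HasDerivAt F (F' x) x)
    (h0 : ∀ z, 0 < z → 0 ≤ F' z) {x : ℝ} (hx : 0 ≤ x) : F 0 ≤ F x := by
  have hm : MonotoneOn F (Set.Ici (0:ℝ)) := by
    apply monotoneOn_of_deriv_nonneg (convex_Ici 0)
      (fun y _ => (hd y).continuousAt.continuousWithinAt)
      (fun y hy => (hd y).differentiableAt.differentiableWithinAt)
    intro y hy
    rw [interior_Ici] at hy
    rw [(hd y).deriv]
    exact h0 y hy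
  exact hm Set.self_mem_Ici hx hx

lemma sin_taylor_lb {x : ℝ} (hx : 0 ≤ x) : x - x^3/6 ≤ Real.sin x := by
  have key : ∀ z : ℝ, HasDerivAt (fun u => Real.sin u - (u - u^3/6))
      (Real.cos z - (1 - z^2/2)) z := by
    intro z
    have h1 : HasDerivAt (fun u : ℝ => u - u^3/6) (1 - z^2/2) z := by
      have := (hasDerivAt_id z).sub ((hasDerivAt_pow 3 z).div_const 6)
      refine this.congr_deriv ?_
      push_cast; ring
    exact (Real.hasDerivAt_sin z).sub h1
  have := taylor_aux key (fun z _ => sub_nonneg.2 Real.one_sub_sq_div_two_le_cos) hx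
  simp only [Real.sin_zero] at this
  nlinarith [this]

lemma cos_taylor_ub {x : ℝ} (hx : 0 ≤ x) : Real.cos x ≤ 1 - x^2/2 + x^4/24 := by
  have key : ∀ z : ℝ, HasDerivAt (fun u => (1 - u^2/2 + u^4/24) - Real.cos u)
      ((Real.sin z - (z - z^3/6))) z := by
    intro z
    have h1 : HasDerivAt (fun u : ℝ => 1 - u^2/2 + u^4/24) (-z + z^3/6) z := by
      have := ((hasDerivAt_const z (1:ℝ)).sub ((hasDerivAt_pow 2 z).div_const 2)).add
        ((hasDerivAt_pow 4 z).div_const 24)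
      refine this.congr_deriv ?_
      push_cast; ring
    have := h1.sub (Real.hasDerivAt_cos z)
    refine this.congr_deriv ?_
    ring
  have := taylor_aux key (fun z hz => sub_nonneg.2 (sin_taylor_lb hz.le)) hx
  simp only [Real.cos_zero] at this
  nlinarith [this]

lemma sin_taylor_ub {x : ℝ} (hx : 0 ≤ x) : Real.sin x ≤ x - x^3/6 + x^5/120 := by
  have key : ∀ z : ℝ, HasDerivAt (fun u => (u - u^3/6 + u^5/120) - Real.sin u)
      ((1 - z^2/2 + z^4/24) - Real.cos z) z := by
    intro z
    have h1 : HasDerivAt (fun u : ℝ => u - u^3/6 + u^5/120) (1 - z^2/2 + z^4/24) z := by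
      have := ((hasDerivAt_id z).sub ((hasDerivAt_pow 3 z).div_const 6)).add
        ((hasDerivAt_pow 5 z).div_const 120)
      refine this.congr_deriv ?_
      push_cast; ring
    exact h1.sub (Real.hasDerivAt_sin z)
  have := taylor_aux key (fun z hz => sub_nonneg.2 (cos_taylor_ub hz.le)) hx
  simp only [Real.sin_zero] at this
  nlinarith [this]

lemma cos_taylor_lb {x : ℝ} (hx : 0 ≤ x) : 1 - x^2/2 + x^4/24 - x^6/720 ≤ Real.cos x := by
  have key : ∀ z : ℝ, HasDerivAt (fun u => Real.cos u - (1 - u^2/2 + u^4/24 - u^6/720))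
      ((z - z^3/6 + z^5/120) - Real.sin z) z := by
    intro z
    have h1 : HasDerivAt (fun u : ℝ => 1 - u^2/2 + u^4/24 - u^6/720)
        (-z + z^3/6 - z^5/120) z := by
      have := (((hasDerivAt_const z (1:ℝ)).sub ((hasDerivAt_pow 2 z).div_const 2)).add
        ((hasDerivAt_pow 4 z).div_const 24)).sub ((hasDerivAt_pow 6 z).div_const 720)
      refine this.congr_deriv ?_
      push_cast; ring
    have := (Real.hasDerivAt_cos z).sub h1
    refine this.congr_deriv ?_
    ring
  have := taylor_aux key (fun z hz => sub_nonneg.2 (sin_taylor_ub hz.le)) hx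
  simp only [Real.cos_zero] at this
  nlinarith [this]

lemma abs_sinc_le_one (t : ℝ) : |Real.sin t / t| ≤ 1 := by
  rcases eq_or_ne t 0 with h | h
  · simp [h]
  · rw [abs_div, div_le_one (abs_pos.2 h)]
    exact Real.abs_sin_le_abs

lemma sinc_intervalIntegrable (a c : ℝ) :
    IntervalIntegrable (fun t => Real.sin t / t) volume a c := by
  apply (_root_.intervalIntegrable_const (c := (1:ℝ))).mono_fun
  · exact (Real.measurable_sin.div measurable_id).aestronglyMeasurable
  · refine Filter.Eventually.of_forall fun t => ?_
    simpa [← abs_div] using _root_.abs_sinc_le_one t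

lemma ae_restrict_ne (s : Set ℝ) (c : ℝ) :
    ∀ᵐ t : ℝ ∂(volume.restrict s), t ≠ c := by
  apply MeasureTheory.ae_restrict_of_ae
  rw [MeasureTheory.ae_iff]
  simp only [not_not]
  have : {t : ℝ | t = c} = {c} := by ext t; simp
  rw [this]
  exact Real.volume_singleton

lemma Si_ge {X : ℝ} (hX : 0 ≤ X) :
    X - X^3/18 ≤ ∫ t in (0:ℝ)..X, Real.sin t / t := by
  have hpoly : IntervalIntegrable (fun t : ℝ => 1 - t^2/6) volume 0 X :=
    (Continuous.intervalIntegrable (by fun_prop) _ _)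
  have hval : ∫ t in (0:ℝ)..X, (1 - t^2/6) = X - X^3/18 := by
    rw [intervalIntegral.integral_sub (Continuous.intervalIntegrable (by fun_prop) _ _)
      (Continuous.intervalIntegrable (by fun_prop) _ _)]
    simp only [intervalIntegral.integral_div, integral_pow, integral_one]
    ring
  rw [← hval]
  apply intervalIntegral.integral_mono_ae_restrict hX hpoly (sinc_intervalIntegrable 0 X)
  filter_upwards [MeasureTheory.ae_restrict_mem measurableSet_Icc, ae_restrict_ne _ 0]
    with t ht hne
  have ht0 : 0 < t := lt_of_le_of_ne ht.1 (Ne.symm hne)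
  rw [le_div_iff₀ ht0]
  nlinarith [sin_taylor_lb ht0.le]

lemma Si_le {X : ℝ} (hX : 0 ≤ X) :
    (∫ t in (0:ℝ)..X, Real.sin t / t) ≤ X - X^3/18 + X^5/600 := by
  have hpoly : IntervalIntegrable (fun t : ℝ => 1 - t^2/6 + t^4/120) volume 0 X :=
    (Continuous.intervalIntegrable (by fun_prop) _ _)
  have hval : ∫ t in (0:ℝ)..X, (1 - t^2/6 + t^4/120) = X - X^3/18 + X^5/600 := by
    rw [intervalIntegral.integral_add (Continuous.intervalIntegrable (by fun_prop) _ _)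
      (Continuous.intervalIntegrable (by fun_prop) _ _),
      intervalIntegral.integral_sub (Continuous.intervalIntegrable (by fun_prop) _ _)
      (Continuous.intervalIntegrable (by fun_prop) _ _)]
    simp only [intervalIntegral.integral_div, integral_pow, integral_one]
    ring
  rw [← hval]
  apply intervalIntegral.integral_mono_ae_restrict hX (sinc_intervalIntegrable 0 X) hpoly
  filter_upwards [MeasureTheory.ae_restrict_mem measurableSet_Icc, ae_restrict_ne _ 0]
    with t ht hne
  have ht0 : 0 < t := lt_of_le_of_ne ht.1 (Ne.symm hne)
  rw [div_le_iff₀ ht0]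
  nlinarith [sin_taylor_ub ht0.le]

lemma f_lower {y : ℝ} (hy : 0 < y) :
    1 - y^2/9 - (2/45)*y^4 ≤
      (∫ t in (0:ℝ)..(2*y), Real.sin t / t) / y - Real.sin y ^ 2 / y ^ 2 := by
  have h2y : (0:ℝ) ≤ 2*y := by linarith
  have hSi : 2 - (4/9)*y^2 ≤ (∫ t in (0:ℝ)..(2*y), Real.sin t / t) / y := by
    rw [le_div_iff₀ hy]
    nlinarith [Si_ge h2y]
  have hsin : Real.sin y ^ 2 / y ^ 2 ≤ 1 - y^2/3 + (2/45)*y^4 := by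
    rw [div_le_iff₀ (by positivity : (0:ℝ) < y^2)]
    have hc : Real.cos (2*y) ≥ 1 - (2*y)^2/2 + (2*y)^4/24 - (2*y)^6/720 := cos_taylor_lb h2y
    have hs : Real.sin y ^ 2 = 1/2 - Real.cos (2*y)/2 := Real.sin_sq_eq_half_sub y
    nlinarith [hc, hs]
  linarith

lemma f_upper {y : ℝ} (hy : 0 < y) :
    (∫ t in (0:ℝ)..(2*y), Real.sin t / t) / y - Real.sin y ^ 2 / y ^ 2 ≤
      1 - y^2/9 + (4/75)*y^4 := by
  have h2y : (0:ℝ) ≤ 2*y := by linarith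
  have hSi : (∫ t in (0:ℝ)..(2*y), Real.sin t / t) / y ≤ 2 - (4/9)*y^2 + (4/75)*y^4 := by
    rw [div_le_iff₀ hy]
    nlinarith [Si_le h2y]
  have hsin : 1 - y^2/3 ≤ Real.sin y ^ 2 / y ^ 2 := by
    rw [le_div_iff₀ (by positivity : (0:ℝ) < y^2)]
    have hc : Real.cos (2*y) ≤ 1 - (2*y)^2/2 + (2*y)^4/24 := cos_taylor_ub h2y
    have hs : Real.sin y ^ 2 = 1/2 - Real.cos (2*y)/2 := Real.sin_sq_eq_half_sub y
    nlinarith [hc, hs]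
  linarith

lemma g_meas (b : ℝ) :
    Measurable (fun ψ : ℝ =>
      (∫ t in (0:ℝ)..(2 * (b * Real.cos ψ)), Real.sin t / t) / (b * Real.cos ψ) -
        Real.sin (b * Real.cos ψ) ^ 2 / (b * Real.cos ψ) ^ 2) := by
  have hc1 : Continuous fun ψ : ℝ => ∫ t in (0:ℝ)..(2 * (b * Real.cos ψ)), Real.sin t / t :=
    (intervalIntegral.continuous_primitive (fun a c => sinc_intervalIntegrable a c) 0).comp
      (by fun_prop)
  have hc2 : Continuous fun ψ : ℝ => b * Real.cos ψ := by fun_prop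
  exact ((hc1.measurable).div hc2.measurable).sub
    (((Real.continuous_sin.comp hc2).pow 2).measurable.div ((hc2.pow 2).measurable))

lemma g_bound (b ψ : ℝ) :
    ‖(∫ t in (0:ℝ)..(2 * (b * Real.cos ψ)), Real.sin t / t) / (b * Real.cos ψ) -
        Real.sin (b * Real.cos ψ) ^ 2 / (b * Real.cos ψ) ^ 2‖ ≤ 3 := by
  set x := b * Real.cos ψ with hx
  have h1 : |(∫ t in (0:ℝ)..(2 * x), Real.sin t / t) / x| ≤ 2 := by
    rcases eq_or_ne x 0 with h | h
    · simp [h]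
    · rw [abs_div, div_le_iff₀ (abs_pos.2 h)]
      have := intervalIntegral.norm_integral_le_of_norm_le_const
        (C := 1) (a := (0:ℝ)) (b := 2*x) (f := fun t => Real.sin t / t)
        (fun t _ => by simpa [← abs_div] using _root_.abs_sinc_le_one t)
      simp only [Real.norm_eq_abs] at this
      calc |∫ t in (0:ℝ)..(2*x), Real.sin t / t| ≤ 1 * |2*x - 0| := this
        _ = 2 * |x| := by rw [one_mul, sub_zero, abs_mul]; simp
  have h2 : |Real.sin x ^ 2 / x ^ 2| ≤ 1 := by
    rcases eq_or_ne x 0 with h | h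
    · simp [h]
    · rw [abs_div, div_le_one (by positivity : (0:ℝ) < |x^2|)]
      rw [abs_pow, abs_pow]
      exact pow_le_pow_left₀ (abs_nonneg _) Real.abs_sin_le_abs 2
  calc ‖_ - _‖ ≤ _ := norm_sub_le _ _
    _ ≤ 3 := by simp only [Real.norm_eq_abs]; linarith

lemma g_integrable (b : ℝ) :
    IntervalIntegrable (fun ψ : ℝ =>
      (∫ t in (0:ℝ)..(2 * (b * Real.cos ψ)), Real.sin t / t) / (b * Real.cos ψ) -
        Real.sin (b * Real.cos ψ) ^ 2 / (b * Real.cos ψ) ^ 2) volume 0 (π/2) := by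
  apply (_root_.intervalIntegrable_const (c := (3:ℝ))).mono_fun
    (g_meas b).aestronglyMeasurable
  refine Filter.Eventually.of_forall fun ψ => ?_
  simpa using g_bound b ψ

lemma hcos2 : ∫ ψ in (0:ℝ)..(π/2), Real.cos ψ ^ 2 = π/4 := by
  rw [integral_cos_sq]
  simp [Real.cos_pi_div_two]
  ring

lemma hcos4 : ∫ ψ in (0:ℝ)..(π/2), Real.cos ψ ^ 4 = 3*π/16 := by
  have h := integral_cos_pow (a := 0) (b := π/2) (n := 2)
  norm_num [Real.cos_pi_div_two, hcos2] at h
  rw [h]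
  ring



/-- Bounds on the normalized effective useful power
`L(b) = (2/π)∫₀^{π/2} [Si(2b cos ψ)/(b cos ψ) - sin²(b cos ψ)/(b cos ψ)²] dψ`:
`1 - b²/18 - b⁴/60 ≤ L(b) ≤ 1 - b²/18 + b⁴/50`. -/
theorem useful_power_bounds (b : ℝ) (hb : 0 < b) :
    1 - b ^ 2 / 18 - b ^ 4 / 60 ≤
        (2 / π) * ∫ ψ in (0:ℝ)..(π / 2),
          ((∫ t in (0:ℝ)..(2 * (b * Real.cos ψ)), Real.sin t / t) / (b * Real.cos ψ) -
            Real.sin (b * Real.cos ψ) ^ 2 / (b * Real.cos ψ) ^ 2) ∧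
      (2 / π) * ∫ ψ in (0:ℝ)..(π / 2),
          ((∫ t in (0:ℝ)..(2 * (b * Real.cos ψ)), Real.sin t / t) / (b * Real.cos ψ) -
            Real.sin (b * Real.cos ψ) ^ 2 / (b * Real.cos ψ) ^ 2) ≤
        1 - b ^ 2 / 18 + b ^ 4 / 50 := by
  have hpi : (0:ℝ) < π := Real.pi_pos
  have hab : (0:ℝ) ≤ π/2 := by linarith
  have h2pi : (0:ℝ) ≤ 2/π := by positivity
  have hcospos : ∀ ψ : ℝ, 0 ≤ ψ → ψ < π/2 → 0 < b * Real.cos ψ := by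
    intro ψ h1 h2
    exact mul_pos hb (Real.cos_pos_of_mem_Ioo ⟨by linarith, h2⟩)
  have hlo : ∫ ψ in (0:ℝ)..(π/2),
      (1 - (b*Real.cos ψ)^2/9 - (2/45)*(b*Real.cos ψ)^4) = π/2 - π*b^2/36 - π*b^4/120 := by
    have h1 : (fun ψ : ℝ => 1 - (b*Real.cos ψ)^2/9 - (2/45)*(b*Real.cos ψ)^4)
        = fun ψ => (1 - (b^2/9)*Real.cos ψ^2) - (2*b^4/45)*Real.cos ψ^4 := by
      funext ψ; ring
    rw [h1, intervalIntegral.integral_sub (Continuous.intervalIntegrable (by fun_prop) _ _)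
        (Continuous.intervalIntegrable (by fun_prop) _ _),
      intervalIntegral.integral_sub (Continuous.intervalIntegrable (by fun_prop) _ _)
        (Continuous.intervalIntegrable (by fun_prop) _ _),
      intervalIntegral.integral_const_mul, intervalIntegral.integral_const_mul,
      hcos2, hcos4, integral_one]
    ring
  have hhi : ∫ ψ in (0:ℝ)..(π/2),
      (1 - (b*Real.cos ψ)^2/9 + (4/75)*(b*Real.cos ψ)^4) = π/2 - π*b^2/36 + π*b^4/100 := by
    have h1 : (fun ψ : ℝ => 1 - (b*Real.cos ψ)^2/9 + (4/75)*(b*Real.cos ψ)^4)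
        = fun ψ => (1 - (b^2/9)*Real.cos ψ^2) + (4*b^4/75)*Real.cos ψ^4 := by
      funext ψ; ring
    rw [h1, intervalIntegral.integral_add (Continuous.intervalIntegrable (by fun_prop) _ _)
        (Continuous.intervalIntegrable (by fun_prop) _ _),
      intervalIntegral.integral_sub (Continuous.intervalIntegrable (by fun_prop) _ _)
        (Continuous.intervalIntegrable (by fun_prop) _ _),
      intervalIntegral.integral_const_mul, intervalIntegral.integral_const_mul,
      hcos2, hcos4, integral_one]
    ring
  constructor
  · have hcmp : (∫ ψ in (0:ℝ)..(π/2), (1 - (b*Real.cos ψ)^2/9 - (2/45)*(b*Real.cos ψ)^4)) ≤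
        ∫ ψ in (0:ℝ)..(π/2),
          ((∫ t in (0:ℝ)..(2 * (b * Real.cos ψ)), Real.sin t / t) / (b * Real.cos ψ) -
            Real.sin (b * Real.cos ψ) ^ 2 / (b * Real.cos ψ) ^ 2) := by
      apply intervalIntegral.integral_mono_ae_restrict hab
        (Continuous.intervalIntegrable (by fun_prop) _ _) (g_integrable b)
      filter_upwards [MeasureTheory.ae_restrict_mem measurableSet_Icc,
        ae_restrict_ne _ (π/2)] with ψ hψ hne
      exact f_lower (hcospos ψ hψ.1 (lt_of_le_of_ne hψ.2 hne))
    calc 1 - b ^ 2 / 18 - b ^ 4 / 60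
        = (2/π) * (π/2 - π*b^2/36 - π*b^4/120) := by field_simp; ring
      _ ≤ _ := by rw [← hlo]; exact mul_le_mul_of_nonneg_left hcmp h2pi
  · have hcmp : (∫ ψ in (0:ℝ)..(π/2),
          ((∫ t in (0:ℝ)..(2 * (b * Real.cos ψ)), Real.sin t / t) / (b * Real.cos ψ) -
            Real.sin (b * Real.cos ψ) ^ 2 / (b * Real.cos ψ) ^ 2)) ≤
        ∫ ψ in (0:ℝ)..(π/2), (1 - (b*Real.cos ψ)^2/9 + (4/75)*(b*Real.cos ψ)^4) := by
      apply intervalIntegral.integral_mono_ae_restrict hab (g_integrable b)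
        (Continuous.intervalIntegrable (by fun_prop) _ _)
      filter_upwards [MeasureTheory.ae_restrict_mem measurableSet_Icc,
        ae_restrict_ne _ (π/2)] with ψ hψ hne
      exact f_upper (hcospos ψ hψ.1 (lt_of_le_of_ne hψ.2 hne))
    calc (2/π) * _ ≤ (2/π) * (π/2 - π*b^2/36 + π*b^4/100) := by
          rw [← hhi]; exact mul_le_mul_of_nonneg_left hcmp h2pi
      _ = 1 - b ^ 2 / 18 + b ^ 4 / 50 := by field_simp; ring
end

section
/- For every real a, the sum over all integers k of sinc²(k + a) equals 1, where sinc(u) = sin(πu)/(πu) (with sinc(0)=1). -/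
open Real

/-- `sinc(u) = sin(πu)/(πu)` with `sinc 0 = 1`. -/
noncomputable def sinc (u : ℝ) : ℝ := if u = 0 then 1 else Real.sin (π * u) / (π * u)

open MeasureTheory intervalIntegral in
/-- Key integral computation: the squared norm of `∫₀¹ e^{-2πibx} dx` is `sinc b ^ 2`. -/
lemma norm_integral_exp_sq (b : ℝ) :
    ‖∫ x in (0:ℝ)..1, Complex.exp ((-(2 * π * b) : ℂ) * Complex.I * x)‖ ^ 2 = _root_.sinc b ^ 2 := by
  rcases eq_or_ne b 0 with hb | hb
  · simp [hb, _root_.sinc]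
  have hπb : π * b ≠ 0 := mul_ne_zero Real.pi_ne_zero hb
  have hc : ((-(2 * π * b) : ℂ) * Complex.I) ≠ 0 := by
    apply mul_ne_zero _ Complex.I_ne_zero
    simpa using mul_ne_zero (mul_ne_zero two_ne_zero Real.pi_ne_zero) hb
  rw [integral_exp_mul_complex hc]
  have h2 : (-(2 * π * b) : ℂ) * Complex.I * ((1:ℝ):ℂ) = ((-(2 * π * b) : ℝ) : ℂ) * Complex.I := by
    push_cast; ring
  have h3 : (-(2 * π * b) : ℂ) * Complex.I * ((0:ℝ):ℂ) = 0 := by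
    push_cast; ring
  rw [h2, h3, Complex.exp_zero]
  set θ : ℝ := -(2 * π * b) with hθ
  have hre : (Complex.exp ((θ : ℂ) * Complex.I) - 1).re = Real.cos θ - 1 := by
    simp [Complex.exp_ofReal_mul_I_re]
  have him : (Complex.exp ((θ : ℂ) * Complex.I) - 1).im = Real.sin θ := by
    simp [Complex.exp_ofReal_mul_I_im]
  have hnum : ‖Complex.exp ((θ : ℂ) * Complex.I) - 1‖ ^ 2
      = (Real.cos θ - 1) ^ 2 + Real.sin θ ^ 2 := by
    rw [Complex.sq_norm, Complex.normSq_apply, hre, him]; ring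
  have hpyth : Real.sin θ ^ 2 + Real.cos θ ^ 2 = 1 := Real.sin_sq_add_cos_sq θ
  have hhalf : Real.sin (θ / 2) ^ 2 = (1 - Real.cos θ) / 2 := by
    have h1 := Real.cos_two_mul (θ / 2)
    have h2 := Real.sin_sq_add_cos_sq (θ / 2)
    have h3 : 2 * (θ / 2) = θ := by ring
    rw [h3] at h1
    nlinarith
  have hsinθ2 : Real.sin (θ / 2) = - Real.sin (π * b) := by
    rw [hθ]
    have : -(2 * π * b) / 2 = -(π * b) := by ring
    rw [this, Real.sin_neg]
  have hnum2 : (Real.cos θ - 1) ^ 2 + Real.sin θ ^ 2 = 4 * Real.sin (π * b) ^ 2 := by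
    have h4 : Real.sin (π * b) ^ 2 = (1 - Real.cos θ) / 2 := by
      rw [← hhalf, hsinθ2]; ring
    nlinarith [hpyth, h4]
  have hden : ‖(-(2 * π * b) : ℂ) * Complex.I‖ ^ 2 = 4 * (π * b) ^ 2 := by
    rw [norm_mul, Complex.norm_I, mul_one]
    have : ((-(2 * π * b) : ℂ)) = ((-(2 * π * b) : ℝ) : ℂ) := by push_cast; ring
    rw [this, Complex.norm_real, Real.norm_eq_abs, sq_abs]
    ring
  have hθcast : (-(2 * π * b) : ℂ) = ((θ : ℝ) : ℂ) := by rw [hθ]; push_cast; ring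
  rw [hθcast, norm_div, div_pow, hnum, hnum2]
  rw [← hθcast, hden]
  rw [_root_.sinc, if_neg hb, div_pow]
  rw [div_eq_div_iff (by positivity) (by positivity)]
  ring

open MeasureTheory AddCircle in
/-- For every real `a`, `∑_{k ∈ ℤ} sinc²(k + a) = 1`. -/
theorem tsum_sinc_sq (a : ℝ) : (∑' k : ℤ, _root_.sinc ((k : ℝ) + a) ^ 2) = 1 := by
  haveI : Fact ((0:ℝ) < 1) := ⟨one_pos⟩
  set g : ℝ → ℂ := fun x => Complex.exp ((-(2 * π * a) : ℂ) * Complex.I * x) with hg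
  set G : AddCircle (1:ℝ) → ℂ := AddCircle.liftIoc 1 0 g with hG
  have hgnorm : ∀ x : ℝ, ‖g x‖ = 1 := by
    intro x
    have : (-(2 * π * a) : ℂ) * Complex.I * x = ((-(2 * π * a) * x : ℝ) : ℂ) * Complex.I := by
      push_cast; ring
    rw [hg]; simp only [this]
    exact Complex.norm_exp_ofReal_mul_I _
  have hGnorm : ∀ t : AddCircle (1:ℝ), ‖G t‖ = 1 := fun t => hgnorm _
  have hGmeas : Measurable G := by
    have h1 : Measurable (AddCircle.equivIoc (1:ℝ) 0) :=
      (AddCircle.measurableEquivIoc (T := 1) 0).measurable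
    have h2 : Continuous g := by
      apply Complex.continuous_exp.comp
      exact (continuous_const.mul Complex.continuous_ofReal)
    exact (h2.measurable.comp measurable_subtype_coe).comp h1
  have hmem : MemLp G 2 haarAddCircle :=
    MemLp.of_bound hGmeas.aestronglyMeasurable 1 (ae_of_all _ fun t => (hGnorm t).le)
  set F := hmem.toLp G with hF
  have hFG : (F : AddCircle (1:ℝ) → ℂ) =ᵐ[haarAddCircle] G := hmem.coeFn_toLp
  have hcoeff : ∀ n : ℤ, fourierCoeff (F : AddCircle (1:ℝ) → ℂ) n = fourierCoeff G n := by
    intro n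
    apply integral_congr_ae
    filter_upwards [hFG] with t ht
    rw [ht]
  have hcoeffval : ∀ n : ℤ, ‖fourierCoeff G n‖ ^ 2 = _root_.sinc ((n : ℝ) + a) ^ 2 := by
    intro n
    rw [hG, fourierCoeff_liftIoc_eq, fourierCoeffOn_eq_integral]
    have hT1 : (0 + 1 - 0 : ℝ) = 1 := by norm_num
    have hint : ∀ x : ℝ, (fourier (-n) (x : AddCircle (0 + 1 - 0 : ℝ))) • g x
        = Complex.exp (-(2 * (π:ℂ) * ((((n : ℝ) + a) : ℝ) : ℂ)) * Complex.I * x) := by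
      intro x
      rw [fourier_coe_apply, hg, smul_eq_mul, ← Complex.exp_add, hT1]
      congr 1
      push_cast
      ring
    simp_rw [hint]
    rw [norm_smul]
    rw [mul_pow]
    have h10 : ‖(1 / (0 + 1 - 0) : ℝ)‖ = 1 := by norm_num
    rw [h10, one_pow, one_mul]
    have h01 : (0 + 1 : ℝ) = 1 := by norm_num
    rw [h01]
    exact norm_integral_exp_sq ((n : ℝ) + a)
  have parseval := tsum_sq_fourierCoeff F
  have hRHS : (∫ t : AddCircle (1:ℝ), ‖(F : AddCircle (1:ℝ) → ℂ) t‖ ^ 2 ∂haarAddCircle) = 1 := by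
    have : (∫ t : AddCircle (1:ℝ), ‖(F : AddCircle (1:ℝ) → ℂ) t‖ ^ 2 ∂haarAddCircle)
        = ∫ t : AddCircle (1:ℝ), ‖G t‖ ^ 2 ∂haarAddCircle := by
      apply integral_congr_ae
      filter_upwards [hFG] with t ht
      rw [ht]
    rw [this]
    have : ∀ t : AddCircle (1:ℝ), ‖G t‖ ^ 2 = 1 := fun t => by rw [hGnorm t]; norm_num
    simp_rw [this]
    simp
  calc (∑' k : ℤ, _root_.sinc ((k : ℝ) + a) ^ 2)
      = ∑' k : ℤ, ‖fourierCoeff (F : AddCircle (1:ℝ) → ℂ) k‖ ^ 2 := by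
        congr 1; funext k; rw [hcoeff k, hcoeffval k]
    _ = 1 := by rw [parseval, hRHS]
end

section
/- For V_max, f_c, T_s, c > 0 and b = πV_max f_c T_s/c, the double integral (1/(2πV_max))∫₀^{2π}∫₀^{V_max} sinc²((f_c T_s/c)·v·cos ψ) dv dψ equals (2/π)∫₀^{π/2}[Si(2b cos ψ)/(b cos ψ) - sin²(b cos ψ)/(b cos ψ)²] dψ. -/
open Real MeasureTheory intervalIntegral


noncomputable def S (t : ℝ) : ℝ := if t = 0 then 1 else Real.sin t / t

lemma S_zero : S 0 = 1 := if_pos rfl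
lemma S_eq {t : ℝ} (ht : t ≠ 0) : S t = Real.sin t / t := if_neg ht

lemma S_cont : Continuous S := by
  rw [continuous_iff_continuousAt]
  intro t
  rcases eq_or_ne t 0 with rfl | ht
  · have h1 : Filter.Tendsto (fun t : ℝ => Real.sin t / t) (nhdsWithin 0 {(0:ℝ)}ᶜ) (nhds 1) := by
      have h := hasDerivAt_iff_tendsto_slope.mp (Real.hasDerivAt_sin 0)
      simp only [slope_fun_def, Real.sin_zero, Real.cos_zero, sub_zero] at h
      refine h.congr' ?_
      filter_upwards [self_mem_nhdsWithin] with x hx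
      simp [div_eq_inv_mul]
    have h2 : Filter.Tendsto S (nhdsWithin 0 {(0:ℝ)}ᶜ) (nhds 1) := by
      refine h1.congr' ?_
      filter_upwards [self_mem_nhdsWithin] with x hx
      exact (S_eq hx).symm
    unfold ContinuousAt
    rw [S_zero, ← nhdsNE_sup_pure, Filter.tendsto_sup]
    exact ⟨h2, by simpa [S_zero] using (tendsto_pure_nhds S 0)⟩
  · have : ContinuousAt (fun t : ℝ => Real.sin t / t) t :=
      (Real.continuous_sin.continuousAt).div continuousAt_id ht
    refine this.congr ?_
    filter_upwards [isOpen_compl_singleton.mem_nhds ht] with x hx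
    exact (S_eq hx).symm

lemma S_even (t : ℝ) : S (-t) = S t := by
  unfold S
  rcases eq_or_ne t 0 with rfl | ht
  · simp
  · rw [if_neg (neg_ne_zero.mpr ht), if_neg ht, Real.sin_neg, neg_div_neg_eq]

lemma hasDerivAt_phi (y : ℝ) :
    HasDerivAt (fun x : ℝ => (∫ t in (0:ℝ)..(2*x), S t) - x * S x ^ 2)
      (S y ^ 2) y := by
  have h1 : HasDerivAt (fun x : ℝ => ∫ t in (0:ℝ)..(2*x), S t) (2 * S (2*y)) y := by
    have inner : HasDerivAt (fun u : ℝ => ∫ t in (0:ℝ)..u, S t) (S (2*y)) (2*y) :=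
      integral_hasDerivAt_right (S_cont.intervalIntegrable _ _)
        (S_cont.stronglyMeasurable.stronglyMeasurableAtFilter) S_cont.continuousAt
    have h2y : HasDerivAt (fun x : ℝ => 2 * x) 2 y := by
      simpa using (hasDerivAt_id y).const_mul 2
    have := inner.comp y h2y
    simpa [Function.comp_def, mul_comm] using this
  have h2 : HasDerivAt (fun x : ℝ => x * S x ^ 2) (2 * S (2*y) - S y ^ 2) y := by
    rcases eq_or_ne y 0 with rfl | hy
    · rw [hasDerivAt_iff_tendsto_slope]
      have base : Filter.Tendsto (fun x : ℝ => S x ^ 2) (nhdsWithin 0 {(0:ℝ)}ᶜ)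
          (nhds (S 0 ^ 2)) := ((S_cont.pow 2).continuousAt).mono_left nhdsWithin_le_nhds
      have key : Filter.Tendsto (fun x : ℝ => S x ^ 2) (nhdsWithin 0 {(0:ℝ)}ᶜ)
          (nhds (2 * S (2*0) - S 0 ^ 2)) := by
        have hv : (2 * S (2*0) - S 0 ^ 2) = S 0 ^ 2 := by norm_num [S_zero]
        rw [hv]; exact base
      refine key.congr' ?_
      filter_upwards [self_mem_nhdsWithin] with x hx
      have hx0 : x ≠ 0 := hx
      rw [slope_fun_def]
      simp only [vsub_eq_sub, smul_eq_mul, sub_zero, zero_mul]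
      rw [inv_mul_cancel_left₀ hx0]
    · have hD : HasDerivAt (fun x : ℝ => Real.sin x ^ 2 / x)
          ((2 * Real.sin y ^ 1 * Real.cos y * y - Real.sin y ^ 2 * 1) / y ^ 2) y :=
        ((Real.hasDerivAt_sin y).pow 2).div (hasDerivAt_id y) hy
      have heq : (fun x : ℝ => x * S x ^ 2) =ᶠ[nhds y] (fun x : ℝ => Real.sin x ^ 2 / x) := by
        filter_upwards [isOpen_compl_singleton.mem_nhds hy] with x hx
        rw [S_eq hx, div_pow, mul_div_assoc', div_eq_div_iff (pow_ne_zero 2 hx) hx]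
        ring
      have hval : (2 * S (2*y) - S y ^ 2) =
          (2 * Real.sin y ^ 1 * Real.cos y * y - Real.sin y ^ 2 * 1) / y ^ 2 := by
        rw [S_eq (mul_ne_zero two_ne_zero hy), S_eq hy, Real.sin_two_mul]
        field_simp
      rw [hval]
      exact hD.congr_of_eventuallyEq heq
  have h3 := h1.sub h2
  rw [show S y ^ 2 = 2 * S (2 * y) - (2 * S (2 * y) - S y ^ 2) by ring]
  exact h3

lemma integral_S_sq (x : ℝ) :
    ∫ t in (0:ℝ)..x, S t ^ 2 = (∫ t in (0:ℝ)..(2*x), S t) - x * S x ^ 2 := by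
  have h := intervalIntegral.integral_eq_sub_of_hasDerivAt
    (f := fun x : ℝ => (∫ t in (0:ℝ)..(2*x), S t) - x * S x ^ 2)
    (fun t _ => hasDerivAt_phi t) ((S_cont.pow 2).intervalIntegrable 0 x)
  simpa [S_zero] using h

lemma sinc_eq_S (u : ℝ) : _root_.sinc u = S (π * u) := by
  unfold _root_.sinc S
  rcases eq_or_ne u 0 with rfl | hu
  · simp
  · rw [if_neg hu, if_neg (mul_ne_zero Real.pi_ne_zero hu)]

lemma sinc_cont : Continuous _root_.sinc := by
  have : _root_.sinc = fun u => S (π * u) := funext sinc_eq_S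
  rw [this]
  exact S_cont.comp (continuous_const.mul continuous_id)

lemma sinc_even (u : ℝ) : _root_.sinc (-u) = _root_.sinc u := by
  rw [_root_.sinc_eq_S, _root_.sinc_eq_S, mul_neg, S_even]

lemma integral_S_eq (u : ℝ) :
    ∫ t in (0:ℝ)..u, S t = ∫ t in (0:ℝ)..u, Real.sin t / t := by
  apply intervalIntegral.integral_congr_ae
  have h0 : ∀ᵐ t : ℝ, t ≠ 0 := by
    rw [MeasureTheory.ae_iff]
    simpa using Real.volume_singleton (a := 0)
  filter_upwards [h0] with t ht _
  exact S_eq ht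

lemma inner_eval (k L cψ : ℝ) (hk : 0 < k) (hL : 0 < L) (hc : 0 < cψ) :
    ∫ v in (0:ℝ)..L, _root_.sinc (k * v * cψ) ^ 2 =
      L * ((∫ t in (0:ℝ)..(2*(π*L*k*cψ)), Real.sin t / t) / (π*L*k*cψ)
        - Real.sin (π*L*k*cψ) ^ 2 / (π*L*k*cψ) ^ 2) := by
  set a : ℝ := π * k * cψ with ha_def
  have ha : 0 < a := by positivity
  have hx : π * L * k * cψ = a * L := by rw [ha_def]; ring
  have step1 : (∫ v in (0:ℝ)..L, _root_.sinc (k * v * cψ) ^ 2) = ∫ v in (0:ℝ)..L, S (a * v) ^ 2 := by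
    apply intervalIntegral.integral_congr
    intro v _
    show _root_.sinc (k * v * cψ) ^ 2 = S (a * v) ^ 2
    rw [_root_.sinc_eq_S, ha_def]
    ring_nf
  have step2 : (∫ v in (0:ℝ)..L, S (a * v) ^ 2) = a⁻¹ * ∫ t in (0:ℝ)..(a*L), S t ^ 2 := by
    have := intervalIntegral.integral_comp_mul_left (a := (0:ℝ)) (b := L)
      (fun t => S t ^ 2) ha.ne'
    simpa using this
  rw [step1, step2, integral_S_sq (a*L), integral_S_eq, hx,
    S_eq (by positivity : a * L ≠ 0), div_pow]
  have haL : a * L ≠ 0 := by positivity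
  field_simp

lemma quarter (F : ℝ → ℝ) (hF : Continuous F) (h1 : ∀ ψ, F (ψ + π) = F ψ)
    (h2 : ∀ ψ, F (π - ψ) = F ψ) :
    ∫ ψ in (0:ℝ)..(2*π), F ψ = 4 * ∫ ψ in (0:ℝ)..(π/2), F ψ := by
  have i1 : ∫ ψ in (0:ℝ)..(2*π), F ψ
      = (∫ ψ in (0:ℝ)..π, F ψ) + ∫ ψ in π..(2*π), F ψ :=
    (intervalIntegral.integral_add_adjacent_intervals
      (hF.intervalIntegrable _ _) (hF.intervalIntegrable _ _)).symm
  have i2 : ∫ ψ in π..(2*π), F ψ = ∫ ψ in (0:ℝ)..π, F ψ := by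
    have h := intervalIntegral.integral_comp_add_right (a := (0:ℝ)) (b := π) F π
    rw [zero_add, (by ring : π + π = 2*π)] at h
    rw [← h]
    exact intervalIntegral.integral_congr fun x _ => h1 x
  have i4 : ∫ ψ in (0:ℝ)..π, F ψ
      = (∫ ψ in (0:ℝ)..(π/2), F ψ) + ∫ ψ in (π/2)..π, F ψ :=
    (intervalIntegral.integral_add_adjacent_intervals
      (hF.intervalIntegrable _ _) (hF.intervalIntegrable _ _)).symm
  have i3 : ∫ ψ in (π/2)..π, F ψ = ∫ ψ in (0:ℝ)..(π/2), F ψ := by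
    have h := intervalIntegral.integral_comp_sub_left (a := (0:ℝ)) (b := π/2) F π
    rw [sub_zero, (by ring : π - π/2 = π/2)] at h
    rw [← h]
    exact intervalIntegral.integral_congr fun x _ => h2 x
  rw [i1, i2, i4, i3]
  ring

/-- Theorem 1 of the paper: the normalized effective useful power equals
`(2/π)∫₀^{π/2}[Si(2b cos ψ)/(b cos ψ) - sin²(b cos ψ)/(b cos ψ)²] dψ`
with `b = π V_max f_c T_s / c`. -/
theorem effective_useful_power (Vmax fc Ts c : ℝ)
    (hV : 0 < Vmax) (hfc : 0 < fc) (hTs : 0 < Ts) (hc : 0 < c) :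
    (1 / (2 * π * Vmax)) * ∫ ψ in (0:ℝ)..(2 * π), ∫ v in (0:ℝ)..Vmax,
        _root_.sinc ((fc * Ts / c) * v * Real.cos ψ) ^ 2 =
      (2 / π) * ∫ ψ in (0:ℝ)..(π / 2),
        ((∫ t in (0:ℝ)..(2 * ((π * Vmax * fc * Ts / c) * Real.cos ψ)), Real.sin t / t) /
            ((π * Vmax * fc * Ts / c) * Real.cos ψ) -
          Real.sin ((π * Vmax * fc * Ts / c) * Real.cos ψ) ^ 2 /
            ((π * Vmax * fc * Ts / c) * Real.cos ψ) ^ 2) := by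
  have hk : 0 < fc * Ts / c := by positivity
  set G : ℝ → ℝ := fun ψ => ∫ v in (0:ℝ)..Vmax, _root_.sinc ((fc * Ts / c) * v * Real.cos ψ) ^ 2
    with hG
  have Gcont : Continuous G := by
    apply intervalIntegral.continuous_parametric_intervalIntegral_of_continuous'
    exact (_root_.sinc_cont.comp (by fun_prop :
      Continuous fun p : ℝ × ℝ => (fc * Ts / c) * p.2 * Real.cos p.1)).pow 2
  have hper : ∀ ψ, G (ψ + π) = G ψ := by
    intro ψ
    apply intervalIntegral.integral_congr
    intro v _
    show _root_.sinc ((fc * Ts / c) * v * Real.cos (ψ + π)) ^ 2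
        = _root_.sinc ((fc * Ts / c) * v * Real.cos ψ) ^ 2
    rw [Real.cos_add_pi, mul_neg, _root_.sinc_even]
  have hrefl : ∀ ψ, G (π - ψ) = G ψ := by
    intro ψ
    apply intervalIntegral.integral_congr
    intro v _
    show _root_.sinc ((fc * Ts / c) * v * Real.cos (π - ψ)) ^ 2
        = _root_.sinc ((fc * Ts / c) * v * Real.cos ψ) ^ 2
    rw [Real.cos_pi_sub, mul_neg, _root_.sinc_even]
  have hquarter := quarter G Gcont hper hrefl
  have heval : ∫ ψ in (0:ℝ)..(π/2), G ψ
      = Vmax * ∫ ψ in (0:ℝ)..(π / 2),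
        ((∫ t in (0:ℝ)..(2 * ((π * Vmax * fc * Ts / c) * Real.cos ψ)), Real.sin t / t) /
            ((π * Vmax * fc * Ts / c) * Real.cos ψ) -
          Real.sin ((π * Vmax * fc * Ts / c) * Real.cos ψ) ^ 2 /
            ((π * Vmax * fc * Ts / c) * Real.cos ψ) ^ 2) := by
    rw [← intervalIntegral.integral_const_mul]
    apply intervalIntegral.integral_congr_ae
    have h0 : ∀ᵐ ψ : ℝ, ψ ≠ π/2 := by
      rw [MeasureTheory.ae_iff]
      simpa using Real.volume_singleton (a := π/2)
    filter_upwards [h0] with ψ hne hmem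
    rw [Set.uIoc_of_le (by positivity : (0:ℝ) ≤ π/2)] at hmem
    have hψlt : ψ < π/2 := lt_of_le_of_ne hmem.2 hne
    have hcos : 0 < Real.cos ψ := Real.cos_pos_of_mem_Ioo
      ⟨by linarith [hmem.1, Real.pi_pos], hψlt⟩
    have h := inner_eval (fc * Ts / c) Vmax (Real.cos ψ) hk hV hcos
    have harg : π * Vmax * (fc * Ts / c) * Real.cos ψ
        = (π * Vmax * fc * Ts / c) * Real.cos ψ := by ring
    rw [harg] at h
    exact h
  rw [hquarter, heval]
  have hπ : π ≠ 0 := Real.pi_ne_zero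
  field_simp
  ring
end

section
/- For every y > 0, Si(2y)/y - sin²(y)/y² > 0. -/
open Real MeasureTheory intervalIntegral Set

private noncomputable def sincF : ℝ → ℝ := fun t => Real.sin t / t

private lemma sincF_meas : Measurable sincF :=
  Real.continuous_sin.measurable.div measurable_id

private lemma sincF_abs_le (t : ℝ) : |sincF t| ≤ 1 := by
  rcases eq_or_ne t 0 with h | h
  · simp [sincF, h]
  · rw [sincF, abs_div, div_le_one (abs_pos.2 h)]
    exact Real.abs_sin_le_abs

private lemma sincF_intInt : ∀ a b : ℝ, IntervalIntegrable sincF volume a b := by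
  intro a b
  rw [intervalIntegrable_iff]
  haveI : IsFiniteMeasure (volume.restrict (uIoc a b)) := by
    constructor
    rw [Measure.restrict_apply_univ]
    exact measure_Ioc_lt_top
  apply MeasureTheory.Integrable.mono' (g := fun _ => (1:ℝ)) (integrable_const 1)
    sincF_meas.aestronglyMeasurable
  filter_upwards with t
  simpa using sincF_abs_le t

private noncomputable def FF : ℝ → ℝ :=
  fun y => (∫ t in (0:ℝ)..(2 * y), sincF t) - Real.sin y ^ 2 / y

private lemma FF_hasDeriv {y : ℝ} (hy : 0 < y) :
    HasDerivAt FF (Real.sin y ^ 2 / y ^ 2) y := by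
  have h1 : HasDerivAt (fun u => ∫ t in (0:ℝ)..u, sincF t) (sincF (2 * y)) (2 * y) :=
    integral_hasDerivAt_right (sincF_intInt 0 (2 * y))
      (sincF_meas.stronglyMeasurable.stronglyMeasurableAtFilter)
      (by
        have : ContinuousAt sincF (2 * y) :=
          (Real.continuous_sin.continuousAt).div continuousAt_id (by positivity)
        exact this)
  have h2 : HasDerivAt (fun y : ℝ => (2 : ℝ) * y) 2 y := by
    simpa using (hasDerivAt_id y).const_mul 2
  have h3 : HasDerivAt (fun y => ∫ t in (0:ℝ)..(2 * y), sincF t) (sincF (2 * y) * 2) y :=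
    h1.comp y h2
  have h4 : HasDerivAt (fun y => Real.sin y ^ 2 / y)
      ((2 * Real.sin y ^ 1 * Real.cos y * y - Real.sin y ^ 2 * 1) / y ^ 2) y :=
    ((Real.hasDerivAt_sin y).pow 2).div (hasDerivAt_id y) hy.ne'
  have := h3.sub h4
  refine (this : HasDerivAt FF _ y).congr_deriv ?_
  rw [sincF, Real.sin_two_mul]
  field_simp
  ring

private lemma FF_cont : ContinuousOn FF (Ici 0) := by
  have hc : Continuous fun y : ℝ => ∫ t in (0:ℝ)..(2 * y), sincF t :=
    (intervalIntegral.continuous_primitive sincF_intInt 0).comp (continuous_const.mul continuous_id)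
  apply hc.continuousOn.sub
  intro y hy
  rcases eq_or_lt_of_le (mem_Ici.mp hy : (0:ℝ) ≤ y) with h | h
  · -- continuity at 0 within Ici 0 via squeeze
    rw [ContinuousWithinAt, ← h]
    simp only [Real.sin_zero, ne_eq, zero_pow, div_zero]
    apply squeeze_zero_norm' (a := fun y : ℝ => y)
    · filter_upwards [self_mem_nhdsWithin] with t (ht : 0 ≤ t)
      rcases eq_or_lt_of_le ht with h0 | h0
      · simp [← h0]
      · rw [Real.norm_eq_abs, abs_div, abs_pow, abs_of_pos h0, div_le_iff₀ h0]
        nlinarith [Real.abs_sin_le_abs (x := t), abs_of_pos h0, abs_nonneg (Real.sin t)]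
    · exact Filter.tendsto_id.mono_left nhdsWithin_le_nhds
  · exact (((Real.continuous_sin.pow 2).continuousAt.div continuousAt_id h.ne').continuousWithinAt)

private lemma FF_pos {y : ℝ} (hy : 0 < y) : 0 < FF y := by
  set z := min y (π / 2) with hz
  have hzpos : 0 < z := lt_min hy (by positivity)
  have hzy : z ≤ y := min_le_left _ _
  have hzpi : z ≤ π / 2 := min_le_right _ _
  have hFz : 0 < FF z := by
    have hmono : StrictMonoOn FF (Icc 0 z) := by
      apply strictMonoOn_of_deriv_pos (convex_Icc 0 z)
        (FF_cont.mono (Icc_subset_Ici_self))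
      intro t ht
      rw [interior_Icc] at ht
      rw [(FF_hasDeriv ht.1).deriv]
      have hs : 0 < Real.sin t := Real.sin_pos_of_pos_of_lt_pi ht.1
        (lt_of_lt_of_le ht.2 (hzpi.trans (by linarith [Real.pi_pos])))
      exact div_pos (pow_pos hs 2) (pow_pos ht.1 2)
    have h0 : FF 0 = 0 := by simp [FF]
    have := hmono (left_mem_Icc.2 hzpos.le) (right_mem_Icc.2 hzpos.le) hzpos
    rwa [h0] at this
  have hmono2 : MonotoneOn FF (Icc z y) := by
    apply monotoneOn_of_deriv_nonneg (convex_Icc z y)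
      (FF_cont.mono (Icc_subset_Ici_self.trans (Ici_subset_Ici.2 hzpos.le)))
    · intro t ht
      rw [interior_Icc] at ht
      exact (FF_hasDeriv (hzpos.trans ht.1)).differentiableAt.differentiableWithinAt
    · intro t ht
      rw [interior_Icc] at ht
      rw [(FF_hasDeriv (hzpos.trans ht.1)).deriv]
      positivity
  have := hmono2 (left_mem_Icc.2 hzy) (right_mem_Icc.2 hzy) hzy
  linarith

/-- For every `y > 0`, `Si(2y)/y - sin²(y)/y² > 0`. -/
theorem integrand_pos (y : ℝ) (hy : 0 < y) :
    0 < (∫ t in (0:ℝ)..(2 * y), Real.sin t / t) / y - Real.sin y ^ 2 / y ^ 2 := by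
  have h := FF_pos hy
  have key : (∫ t in (0:ℝ)..(2 * y), Real.sin t / t) / y - Real.sin y ^ 2 / y ^ 2
      = FF y / y := by
    simp only [FF, sincF, sub_div, div_div, pow_two]
  rw [key]
  exact div_pos h hy
end
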